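/- Let U be a nonempty finite type, let X take values in {A,B}, and let p be any joint pmf of (U,X) with P(U=u)>0 for every u. Then there exists a conditional distribution (Markov kernel) w(q | u, x) from U×{A,B} to the query set {qA, qB, qAB} such that the induced joint distribution of (U,X,Q) (with P(U=u,X=x,Q=q)=p(u,x)·w(q|u,x)) satisfies: (i) decodability: P(X=x, Q=q')=0 for every singleton query q' different from {x}; (ii) privacy: Q is independent of U; and (iii) E[ℓ(Q)] = 2 − π(A) − π(B), where π(x) = min over u of P(X=x|U=u) and ℓ assigns length 1 to qA and qB and length 2 to qAB. -/

import Mathlib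

/-!
Let `π x = min_u P(X = x | U = u)`. Given `(u, x)`, send the singleton query for `x` with
probability `π x / P(X = x | U = u)` and the query for both sources otherwise. Then
`P(U = u, Q = q) = P(U = u) · c q` with `c = (π A, π B, 1 - π A - π B)` on `(qA, qB, qAB)`,
so `Q` is independent of `U` with law `c`, and `E[ℓ(Q)] = π A + π B + 2 (1 - π A - π B)`.
-/

/-- The two sources. -/
inductive Src | A | B
deriving DecidableEq

instance : Fintype Src := ⟨{Src.A, Src.B}, fun x => by cases x <;> simp⟩

/-- The three possible queries: only source A, only source B, or both. -/
inductive Qry | qA | qB | qAB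
deriving DecidableEq

instance : Fintype Qry := ⟨{Qry.qA, Qry.qB, Qry.qAB}, fun x => by cases x <;> simp⟩

/-- The length (download cost) of each query. -/
noncomputable def len : Qry → ℝ
  | Qry.qA => 1
  | Qry.qB => 1
  | Qry.qAB => 2

open Finset

lemma Src.sum_univ (f : Src → ℝ) : ∑ x, f x = f .A + f .B := by
  rw [show (univ : Finset Src) = {.A, .B} from rfl, sum_pair (by decide)]

lemma Qry.sum_univ (f : Qry → ℝ) : ∑ q, f q = f .qA + f .qB + f .qAB := by
  rw [show (univ : Finset Qry) = {.qA, .qB, .qAB} from rfl, sum_insert (by decide),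
    sum_pair (by decide), add_assoc]

section Factorization

variable {U X Q : Type*} [Fintype U] [Fintype X]
  (p : U → X → ℝ) (w : U → X → Q → ℝ) (c : Q → ℝ)

theorem indep_of_joint_eq_mul (hsum : ∑ u, ∑ x, p u x = 1)
    (h : ∀ u q, ∑ x, p u x * w u x q = c q * ∑ x, p u x) (u : U) (q : Q) :
    ∑ x, p u x * w u x q = (∑ x, p u x) * ∑ u', ∑ x, p u' x * w u' x q := by
  simp only [h, ← mul_sum, hsum, mul_one, mul_comm]

theorem expectation_eq_of_joint_eq_mul [Fintype Q] (hsum : ∑ u, ∑ x, p u x = 1)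
    (h : ∀ u q, ∑ x, p u x * w u x q = c q * ∑ x, p u x) (f : Q → ℝ) :
    ∑ u, ∑ x, ∑ q, p u x * w u x q * f q = ∑ q, c q * f q := by
  calc ∑ u, ∑ x, ∑ q, p u x * w u x q * f q
      = ∑ u, ∑ q, (∑ x, p u x * w u x q) * f q := by
        simp only [sum_mul]; exact sum_congr rfl fun u _ => sum_comm
    _ = ∑ u, ∑ q, c q * f q * ∑ x, p u x := by simp only [h, mul_right_comm]
    _ = ∑ q, c q * f q * ∑ u, ∑ x, p u x := by rw [sum_comm]; simp only [mul_sum]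
    _ = ∑ q, c q * f q := by simp only [hsum, mul_one]

end Factorization

section Thinning

variable {U : Type*}

def thinKernel (r : U → Src → ℝ) : U → Src → Qry → ℝ
  | u, .A, .qA => r u .A
  | u, .A, .qAB => 1 - r u .A
  | u, .B, .qB => r u .B
  | u, .B, .qAB => 1 - r u .B
  | _, _, _ => 0

def queryLaw (π : Src → ℝ) : Qry → ℝ
  | .qA => π .A
  | .qB => π .B
  | .qAB => 1 - π .A - π .B

variable (r : U → Src → ℝ)

theorem thinKernel_nonneg (h0 : ∀ u x, 0 ≤ r u x) (h1 : ∀ u x, r u x ≤ 1) (u : U) (x : Src)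
    (q : Qry) : 0 ≤ thinKernel r u x q := by
  cases x <;> cases q <;> simp [thinKernel, h0, h1]

theorem sum_thinKernel (u : U) (x : Src) : ∑ q, thinKernel r u x q = 1 := by
  cases x <;> simp [Qry.sum_univ, thinKernel]

theorem sum_mul_thinKernel (p : U → Src → ℝ) (π : Src → ℝ)
    (hr : ∀ u x, p u x * r u x = π x * ∑ x', p u x') (u : U) (q : Qry) :
    ∑ x, p u x * thinKernel r u x q = queryLaw π q * ∑ x, p u x := by
  have hA := hr u .A
  have hB := hr u .B
  simp only [Src.sum_univ] at hA hB ⊢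
  cases q <;> simp only [thinKernel, queryLaw]
  · linear_combination hA
  · linear_combination hB
  · linear_combination -hA - hB

end Thinning

section KeepProb

variable {U : Type*} (p : U → Src → ℝ) (π : Src → ℝ)

/-- `π x / P(X = x | U = u)`. Where `p u x = 0` this is `0` by the convention `a / 0 = 0`. -/
noncomputable def keepProb (u : U) (x : Src) : ℝ := π x * (∑ x', p u x') / p u x

theorem keepProb_nonneg (hp : ∀ u x, 0 ≤ p u x) (hπ : ∀ x, 0 ≤ π x) (u : U) (x : Src) :
    0 ≤ keepProb p π u x :=
  div_nonneg (mul_nonneg (hπ x) (sum_nonneg fun x' _ => hp u x')) (hp u x)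

theorem keepProb_le_one (hp : ∀ u x, 0 ≤ p u x) (hπp : ∀ u x, π x * ∑ x', p u x' ≤ p u x)
    (u : U) (x : Src) : keepProb p π u x ≤ 1 :=
  div_le_one_of_le₀ (hπp u x) (hp u x)

theorem mul_keepProb (hp : ∀ u x, 0 ≤ p u x) (hπ : ∀ x, 0 ≤ π x)
    (hπp : ∀ u x, π x * ∑ x', p u x' ≤ p u x) (u : U) (x : Src) :
    p u x * keepProb p π u x = π x * ∑ x', p u x' :=
  mul_div_cancel_of_imp' fun h =>
    le_antisymm (h ▸ hπp u x) (mul_nonneg (hπ x) (sum_nonneg fun x' _ => hp u x'))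

end KeepProb

section MinCond

variable {U : Type*} [Fintype U] [Nonempty U] (p : U → Src → ℝ)

noncomputable def minCond (x : Src) : ℝ :=
  univ.inf' univ_nonempty fun u => p u x / ∑ x', p u x'

variable {p} (hpos : ∀ u, 0 < ∑ x, p u x)
include hpos

theorem minCond_nonneg (hp : ∀ u x, 0 ≤ p u x) (x : Src) : 0 ≤ minCond p x :=
  le_inf' _ _ fun u _ => div_nonneg (hp u x) (hpos u).le

theorem minCond_mul_le (u : U) (x : Src) : minCond p x * ∑ x', p u x' ≤ p u x :=
  (le_div_iff₀ (hpos u)).mp (inf'_le _ (mem_univ u))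

end MinCond

/-- Achievability: for any joint pmf `p` of `(U,X)` with `P(U=u) > 0` for all `u`, there is a
Markov kernel `w(q|u,x)` such that the induced joint law of `(U,X,Q)` is decodable, private
(Q independent of U), and has expected query length exactly `2 - π(A) - π(B)`. -/
theorem achievability_exists_kernel {U : Type} [Fintype U] [Nonempty U]
    (p : U → Src → ℝ)
    (hnn : ∀ u x, 0 ≤ p u x)
    (hsum : ∑ u, ∑ x, p u x = 1)
    (hUpos : ∀ u, 0 < ∑ x, p u x) :
    ∃ w : U → Src → Qry → ℝ,
      (∀ u x q, 0 ≤ w u x q) ∧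
      (∀ u x, ∑ q, w u x q = 1) ∧
      -- decodability: the singleton query for the other source is never sent
      (∑ u, p u Src.A * w u Src.A Qry.qB = 0) ∧
      (∑ u, p u Src.B * w u Src.B Qry.qA = 0) ∧
      -- privacy: Q is independent of U
      (∀ u q, ∑ x, p u x * w u x q
        = (∑ x, p u x) * (∑ u', ∑ x, p u' x * w u' x q)) ∧
      -- expected query length
      (∑ u, ∑ x, ∑ q, p u x * w u x q * len q
        = 2 - Finset.univ.inf' Finset.univ_nonempty (fun u => p u Src.A / (∑ x, p u x))
            - Finset.univ.inf' Finset.univ_nonempty (fun u => p u Src.B / (∑ x, p u x))) := by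
  have hπ := minCond_nonneg hUpos hnn
  have hπp := minCond_mul_le hUpos
  have hjoint := sum_mul_thinKernel _ p (minCond p) (mul_keepProb p _ hnn hπ hπp)
  refine ⟨thinKernel (keepProb p (minCond p)),
    thinKernel_nonneg _ (keepProb_nonneg p _ hnn hπ) (keepProb_le_one p _ hnn hπp),
    sum_thinKernel _, by simp [thinKernel], by simp [thinKernel],
    indep_of_joint_eq_mul p _ _ hsum hjoint, ?_⟩
  show _ = 2 - minCond p .A - minCond p .B
  rw [expectation_eq_of_joint_eq_mul p _ _ hsum hjoint, Qry.sum_univ]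
  simp only [queryLaw, len]
  ring
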